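/- arXiv:1507.02759 — 4 statements merged into one kernel-verified Lean document; each statement's English description precedes it below -/
import Mathlib

section
/- Let K be a compact Hausdorff space and let E be a Banach lattice. If E is order isomorphic to C(K), then the positive cone E₊ = {x ∈ E : x ≥ 0} has nonempty interior; consequently E has an order unit, i.e., there exists u ≥ 0 in E such that for every x ∈ E there is n ∈ ℕ with |x| ≤ n·u. -/
/-!
The order intervals `[T(-n), T(n)]` are closed and, since `T` is an order isomorphism onto `E`,
they cover `E`. By Baire's theorem one of them has an interior point `y`, and then
`y - T(-n)` is an interior point of the positive cone. Such a point `u` is an order unit: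
`u - y / n → u`, so `u - y / n ≥ 0` for large `n`.
-/

open Filter Set Topology

theorem ContinuousMap.iUnion_Icc_const_natCast_eq_univ (K : Type*) [TopologicalSpace K]
    [CompactSpace K] :
    ⋃ n : ℕ, Icc (const K (-(n : ℝ))) (const K (n : ℝ)) = univ := by
  refine eq_univ_of_forall fun f => mem_iUnion.2 ⟨⌈‖f‖⌉₊, ?_⟩
  have hbound (k : K) : |f k| ≤ ⌈‖f‖⌉₊ :=
    (f.norm_coe_le_norm k).trans (Nat.le_ceil _)
  exact ⟨fun k => (abs_le.1 (hbound k)).1, fun k => (abs_le.1 (hbound k)).2⟩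

theorem sub_mem_interior_Ici_zero {G : Type*} [TopologicalSpace G] [AddCommGroup G]
    [IsTopologicalAddGroup G] [PartialOrder G] [IsOrderedAddMonoid G] {a y : G}
    (hy : y ∈ interior (Ici a)) : y - a ∈ interior (Ici 0) := by
  have hy' : y - a ∈ (Homeomorph.addRight a) ⁻¹' interior (Ici a) := by
    simpa using hy
  rwa [Homeomorph.preimage_interior, Homeomorph.coe_addRight, preimage_add_const_Ici,
    sub_self] at hy'

theorem exists_le_natCast_smul_of_mem_interior_Ici_zero {E : Type*} [NormedAddCommGroup E]
    [NormedSpace ℝ E] [PartialOrder E] [IsOrderedAddMonoid E] [PosSMulMono ℝ E] {u : E}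
    (hu : u ∈ interior (Ici 0)) (y : E) : ∃ n : ℕ, y ≤ (n : ℝ) • u := by
  have hlim : Tendsto (fun n : ℕ => u - (n : ℝ)⁻¹ • y) atTop (𝓝 u) := by
    have hinv : Tendsto (fun n : ℕ => (n : ℝ)⁻¹) atTop (𝓝 0) :=
      tendsto_inv_atTop_zero.comp tendsto_natCast_atTop_atTop
    simpa using (hinv.smul_const y).const_sub u
  obtain ⟨n, hn, hpos⟩ :=
    ((hlim.eventually (mem_interior_iff_mem_nhds.1 hu)).and (eventually_ne_atTop 0)).exists
  refine ⟨n, sub_nonneg.1 ?_⟩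
  have hn' : (n : ℝ) ≠ 0 := Nat.cast_ne_zero.2 hpos
  simpa [smul_sub, smul_inv_smul₀ hn'] using smul_nonneg (Nat.cast_nonneg n : (0 : ℝ) ≤ n) hn

theorem stmt1_general (K : Type*) [TopologicalSpace K] [CompactSpace K]
    (E : Type*) [NormedAddCommGroup E] [Lattice E] [HasSolidNorm E]
    [IsOrderedAddMonoid E] [NormedSpace ℝ E] [PosSMulStrictMono ℝ E]
    [CompleteSpace E]
    (T : C(K, ℝ) → E) (hbij : Function.Bijective T)
    (hord : ∀ f g : C(K, ℝ), f ≤ g ↔ T f ≤ T g) :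
    (interior {x : E | 0 ≤ x}).Nonempty ∧
      ∃ u : E, 0 ≤ u ∧ ∀ x : E, ∃ n : ℕ, |x| ≤ (n : ℝ) • u := by
  have hcover : ⋃ n : ℕ, Icc (T (.const K (-(n : ℝ)))) (T (.const K (n : ℝ))) = univ := by
    refine eq_univ_of_forall fun x => ?_
    obtain ⟨f, rfl⟩ := hbij.2 x
    obtain ⟨n, hn⟩ :=
      mem_iUnion.1 (ContinuousMap.iUnion_Icc_const_natCast_eq_univ K ▸ mem_univ f)
    exact mem_iUnion.2 ⟨n, (hord _ _).1 hn.1, (hord _ _).1 hn.2⟩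
  obtain ⟨n, y, hy⟩ := nonempty_interior_of_iUnion_of_closed (fun _ => isClosed_Icc) hcover
  have hu := sub_mem_interior_Ici_zero (interior_mono Icc_subset_Ici_self hy)
  exact ⟨⟨_, hu⟩, _, interior_subset hu,
    fun x => exists_le_natCast_smul_of_mem_interior_Ici_zero hu |x|⟩

/-- If a Banach lattice `E` is (possibly nonlinearly) order isomorphic to
`C(K)` for a compact Hausdorff space `K`, then the positive cone of `E` has nonempty
interior, and `E` has an order unit. -/
theorem stmt1 (K : Type*) [TopologicalSpace K] [CompactSpace K] [T2Space K]
    (E : Type*) [NormedAddCommGroup E] [Lattice E] [HasSolidNorm E]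
    [IsOrderedAddMonoid E] [NormedSpace ℝ E] [PosSMulStrictMono ℝ E] [PosSMulReflectLT ℝ E]
    [CompleteSpace E]
    (T : C(K, ℝ) → E) (hbij : Function.Bijective T)
    (hord : ∀ f g : C(K, ℝ), f ≤ g ↔ T f ≤ T g) :
    (interior {x : E | 0 ≤ x}).Nonempty ∧
      ∃ u : E, 0 ≤ u ∧ ∀ x : E, ∃ n : ℕ, |x| ≤ (n : ℝ) • u :=
  stmt1_general K E T hbij hord
end

section
/- Let E be a Banach lattice. If E is order isomorphic to c₀ (i.e., there exists a not-necessarily-linear bijection T : c₀ → E such that x ≤ y if and only if Tx ≤ Ty), then E is lattice isomorphic to c₀; that is, there exists a linear bijection S : c₀ → E with S|x| = |Sx| for all x ∈ c₀. -/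
open Filter Topology ZeroAtInfty

namespace ZeroAtInftyContinuousMap

variable {α : Type*} [TopologicalSpace α]

/-- Pointwise supremum on `C₀(α, ℝ)`. -/
noncomputable instance : Max C₀(α, ℝ) where
  max f g :=
    { toFun := fun x => f x ⊔ g x
      continuous_toFun := (map_continuous f).sup (map_continuous g)
      zero_at_infty' := by
        simpa using (zero_at_infty f).sup_nhds (zero_at_infty g) }

/-- Pointwise infimum on `C₀(α, ℝ)`. -/
noncomputable instance : Min C₀(α, ℝ) where
  min f g :=
    { toFun := fun x => f x ⊓ g x
      continuous_toFun := (map_continuous f).inf (map_continuous g)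
      zero_at_infty' := by
        simpa using (zero_at_infty f).inf_nhds (zero_at_infty g) }

/-- `C₀(α, ℝ)` with the pointwise order is a lattice; in particular `c₀ = C₀(ℕ, ℝ)` is the
Banach lattice of real sequences converging to `0` with coordinatewise order. -/
noncomputable instance : Lattice C₀(α, ℝ) :=
  letI : PartialOrder C₀(α, ℝ) := PartialOrder.lift _ DFunLike.coe_injective
  DFunLike.coe_injective.lattice _ Iff.rfl Iff.rfl (fun _ _ => rfl) (fun _ _ => rfl)

end ZeroAtInftyContinuousMap

/-- The unit vector basis `(eₙ)` of `c₀ = C₀(ℕ, ℝ)`. -/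
noncomputable def c0unit (n : ℕ) : C₀(ℕ, ℝ) :=
  { toFun := fun m => if m = n then 1 else 0
    continuous_toFun := continuous_of_discreteTopology
    zero_at_infty' := by
      rw [cocompact_eq_atTop]
      refine tendsto_nhds_of_eventually_eq ?_
      filter_upwards [Filter.eventually_gt_atTop n] with m hm
      exact if_neg (by omega) }

/-!
Normalise `T 0 = 0`, so that `T` is an order isomorphism `o` fixing `0`. It preserves `⊔` and `⊓`,
hence disjointness, and therefore maps sums of disjoint positive elements to sums. A Baire category
argument on the positive cone of `c₀` gives `δ > 0` such that `‖o (∑ n ∈ F, δ • eₙ)‖` is bounded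
uniformly over finite sets `F`. So the vectors `vₙ = o (δ • eₙ)` are positive, pairwise disjoint and
have uniformly bounded finite sums, and `f ↦ ∑ fₙ • vₙ` is a well-defined injective linear lattice
homomorphism `c₀ → E`. It is onto: the order interval `[0, o (s • eₙ)]` is a chain, like its
preimage, hence lies on the ray through `vₙ`; so `y = o g ≥ 0` has components
`o (gₙ • eₙ) = rₙ • vₙ`, and `rₙ → 0` since `θ • vₙ ≤ y` for infinitely many `n` would give
`δ • eₙ ≤ o⁻¹ (θ⁻¹ • y)` for infinitely many `n`.
-/

open Set Finset

section LatticeOrderedGroup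

variable {α : Type*} [AddCommGroup α] [Lattice α] [IsOrderedAddMonoid α] {a b c : α}

lemma sup_eq_add_of_inf_eq_zero (h : a ⊓ b = 0) : a ⊔ b = a + b := by
  simpa [h] using inf_add_sup a b

lemma add_inf_eq_zero (ha : 0 ≤ a) (hb : 0 ≤ b) (hac : a ⊓ c = 0) (hbc : b ⊓ c = 0) :
    (a + b) ⊓ c = 0 := by
  have hc : 0 ≤ c := hbc ▸ inf_le_right
  refine le_antisymm ?_ (le_inf (add_nonneg ha hb) hc)
  calc (a + b) ⊓ c ≤ (a + b) ⊓ (a + c) ⊓ c :=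
        le_inf (inf_le_inf_left _ (le_add_of_nonneg_left ha)) inf_le_right
    _ = a ⊓ c := by rw [← add_inf, hbc, add_zero]
    _ = 0 := hac

lemma sum_inf_eq_zero {ι : Type*} {s : Finset ι} {x : ι → α} (hx : ∀ i ∈ s, 0 ≤ x i)
    (hc : 0 ≤ c) (h : ∀ i ∈ s, x i ⊓ c = 0) : (∑ i ∈ s, x i) ⊓ c = 0 :=
  (sum_induction x (fun y => 0 ≤ y ∧ y ⊓ c = 0)
    (fun _ _ hy hz => ⟨add_nonneg hy.1 hz.1, add_inf_eq_zero hy.1 hz.1 hy.2 hz.2⟩)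
    ⟨le_rfl, inf_eq_left.2 hc⟩ fun i hi => ⟨hx i hi, h i hi⟩).2

lemma sum_inf_sum_eq_zero {ι κ : Type*} {s : Finset ι} {t : Finset κ} {x : ι → α} {y : κ → α}
    (hx : ∀ i ∈ s, 0 ≤ x i) (hy : ∀ j ∈ t, 0 ≤ y j) (h : ∀ i ∈ s, ∀ j ∈ t, x i ⊓ y j = 0) :
    (∑ i ∈ s, x i) ⊓ (∑ j ∈ t, y j) = 0 :=
  sum_inf_eq_zero hx (sum_nonneg hy) fun i hi => by
    rw [inf_comm]
    exact sum_inf_eq_zero hy (hx i hi) fun j hj => by rw [inf_comm]; exact h i hi j hj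

lemma OrderIso.map_sum_of_pairwise_inf_eq_zero {β : Type*} [AddCommGroup β] [Lattice β]
    [IsOrderedAddMonoid β] (o : α ≃o β) (h0 : o 0 = 0) {ι : Type*} {x : ι → α}
    (hx : ∀ i, 0 ≤ x i) (hd : Pairwise fun i j => x i ⊓ x j = 0) (s : Finset ι) :
    o (∑ i ∈ s, x i) = ∑ i ∈ s, o (x i) := by
  classical
  induction s using Finset.induction_on with
  | empty => simpa using h0
  | insert a s ha ih =>
    have hdis : x a ⊓ ∑ i ∈ s, x i = 0 := by
      rw [inf_comm]
      exact sum_inf_eq_zero (fun i _ => hx i) (hx a) fun i hi => hd (ne_of_mem_of_not_mem hi ha)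
    rw [sum_insert ha, sum_insert ha, ← sup_eq_add_of_inf_eq_zero hdis, o.map_sup, ← ih]
    exact sup_eq_add_of_inf_eq_zero (by rw [← o.map_inf, hdis, h0])

variable [Module ℝ α] [PosSMulMono ℝ α]

lemma smul_inf_smul_eq_zero {s t : ℝ} (hs : 0 ≤ s) (ht : 0 ≤ t) (ha : 0 ≤ a) (hb : 0 ≤ b)
    (h : a ⊓ b = 0) : (s • a) ⊓ (t • b) = 0 := by
  have hc : (0 : ℝ) < s + t + 1 := by positivity
  refine le_antisymm ?_ (le_inf (smul_nonneg hs ha) (smul_nonneg ht hb))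
  calc (s • a) ⊓ (t • b) ≤ ((s + t + 1) • a) ⊓ ((s + t + 1) • b) :=
        inf_le_inf (smul_le_smul_of_nonneg_right (by linarith) ha)
          (smul_le_smul_of_nonneg_right (by linarith) hb)
    _ = (s + t + 1) • (a ⊓ b) := ((OrderIso.smulRight hc).map_inf a b).symm
    _ = 0 := by rw [h, smul_zero]

lemma abs_sum_smul_of_pairwise_inf_eq_zero {ι : Type*} {v : ι → α} (hv : ∀ i, 0 ≤ v i)
    (hd : Pairwise fun i j => v i ⊓ v j = 0) (s : Finset ι) (a : ι → ℝ) :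
    |∑ i ∈ s, a i • v i| = ∑ i ∈ s, |a i| • v i := by
  set p := ∑ i ∈ s, (a i)⁺ • v i
  set q := ∑ i ∈ s, (a i)⁻ • v i
  have hpq : q ⊓ p = 0 := by
    refine sum_inf_sum_eq_zero (fun i _ => smul_nonneg (negPart_nonneg _) (hv i))
      (fun i _ => smul_nonneg (posPart_nonneg _) (hv i)) fun i _ j _ => ?_
    obtain rfl | hij := eq_or_ne i j
    · rcases le_total 0 (a i) with hai | hai
      · rw [negPart_eq_zero.2 hai, zero_smul]
        exact inf_eq_left.2 (smul_nonneg (posPart_nonneg _) (hv i))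
      · rw [posPart_eq_zero.2 hai, zero_smul]
        exact inf_eq_right.2 (smul_nonneg (negPart_nonneg _) (hv i))
    · exact smul_inf_smul_eq_zero (negPart_nonneg _) (posPart_nonneg _) (hv i) (hv j) (hd hij)
  calc |∑ i ∈ s, a i • v i| = |p - q| := by
        simp_rw [p, q, ← sum_sub_distrib, ← sub_smul, posPart_sub_negPart]
    _ = q ⊔ p - q ⊓ p := (sup_sub_inf_eq_abs_sub q p).symm
    _ = p + q := by rw [hpq, sub_zero, sup_eq_add_of_inf_eq_zero hpq, add_comm]
    _ = ∑ i ∈ s, |a i| • v i := by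
        simp_rw [p, q, ← sum_add_distrib, ← add_smul, posPart_add_negPart]

end LatticeOrderedGroup

section ChainInterval

variable {E : Type*} [AddCommGroup E] [PartialOrder E] [IsOrderedAddMonoid E] [Module ℝ E]
  [PosSMulMono ℝ E] [TopologicalSpace E] [OrderClosedTopology E] [ContinuousSMul ℝ E]

lemma exists_eq_smul_of_isChain_Icc {b c : E} (hch : IsChain (· ≤ ·) (Icc 0 c))
    (hb : b ∈ Icc 0 c) : ∃ t ∈ Icc (0 : ℝ) 1, b = t • c := by
  have hc : 0 ≤ c := hb.1.trans hb.2
  have hmem : ∀ s ∈ Icc (0 : ℝ) 1, s • c ∈ Icc 0 c := fun s hs =>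
    ⟨smul_nonneg hs.1 hc, smul_le_of_le_one_left hc hs.2⟩
  set A := {s ∈ Icc (0 : ℝ) 1 | s • c ≤ b}
  have hA : IsClosed A :=
    isClosed_Icc.inter (isClosed_le (continuous_id.smul continuous_const) continuous_const)
  have hA0 : (0 : ℝ) ∈ A := ⟨left_mem_Icc.2 zero_le_one, by simpa using hb.1⟩
  have hAbdd : BddAbove A := ⟨1, fun s hs => hs.1.2⟩
  set t := sSup A
  have htA : t ∈ A := hA.csSup_mem ⟨0, hA0⟩ hAbdd
  refine ⟨t, htA.1, le_antisymm ?_ htA.2⟩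
  rcases htA.1.2.eq_or_lt with ht1 | ht1
  · simpa [ht1] using hb.2
  -- `s • c ≤ b` would contradict the maximality of `t`
  have hgt : ∀ s ∈ Ioo t 1, b ≤ s • c := fun s hs =>
    ((hch.total (hmem s ⟨htA.1.1.trans hs.1.le, hs.2.le⟩) hb).resolve_left fun hsb =>
      hs.1.not_ge (le_csSup hAbdd ⟨⟨htA.1.1.trans hs.1.le, hs.2.le⟩, hsb⟩))
  exact ge_of_tendsto
    (((continuous_id.smul continuous_const).tendsto t).mono_left nhdsWithin_le_nhds)
    (eventually_of_mem (Ioo_mem_nhdsGT ht1) hgt)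

lemma exists_nonneg_smul_eq_of_isChain_Icc {x y c : E} (hch : IsChain (· ≤ ·) (Icc 0 c))
    (hx : x ∈ Icc 0 c) (hy : y ∈ Icc 0 c) (hy0 : y ≠ 0) : ∃ r ≥ (0 : ℝ), x = r • y := by
  obtain ⟨a, ha, rfl⟩ := exists_eq_smul_of_isChain_Icc hch hx
  obtain ⟨b, hb, rfl⟩ := exists_eq_smul_of_isChain_Icc hch hy
  have hb0 : b ≠ 0 := by rintro rfl; simp at hy0
  exact ⟨a / b, div_nonneg ha.1 hb.1, by rw [smul_smul, div_mul_cancel₀ _ hb0]⟩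

end ChainInterval

namespace ZeroAtInftyContinuousMap

variable {α : Type*} [TopologicalSpace α]

instance : IsOrderedAddMonoid C₀(α, ℝ) where
  add_le_add_left _ _ h c x := add_le_add_left (h x) (c x)

lemma abs_apply_le_norm (f : C₀(α, ℝ)) (x : α) : |f x| ≤ ‖f‖ := by
  rw [← norm_toBCF_eq_norm]
  exact f.toBCF.norm_coe_le_norm x

lemma norm_le_of_forall_abs_apply_le {f : C₀(α, ℝ)} {C : ℝ} (hC : 0 ≤ C) (h : ∀ x, |f x| ≤ C) :
    ‖f‖ ≤ C := by
  rw [← norm_toBCF_eq_norm]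
  exact (BoundedContinuousFunction.norm_le hC).2 h

instance : HasSolidNorm C₀(α, ℝ) :=
  ⟨fun _ g h => norm_le_of_forall_abs_apply_le (norm_nonneg g) fun x =>
    (h x).trans (abs_apply_le_norm g x)⟩

lemma abs_apply (f : C₀(α, ℝ)) (x : α) : |f| x = |f x| :=
  rfl

lemma sum_apply {β : Type*} [TopologicalSpace β] [AddCommMonoid β] [ContinuousAdd β] {ι : Type*}
    (s : Finset ι) (f : ι → C₀(α, β)) (x : α) : (∑ i ∈ s, f i) x = ∑ i ∈ s, f i x :=
  map_sum (⟨⟨fun g : C₀(α, β) => g x, rfl⟩, fun _ _ => rfl⟩ : C₀(α, β) →+ β) f s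

lemma tendsto_cofinite [DiscreteTopology α] (f : C₀(α, ℝ)) :
    Filter.Tendsto f Filter.cofinite (𝓝 0) := by
  simpa [cocompact_eq_cofinite] using zero_at_infty f

end ZeroAtInftyContinuousMap

lemma smul_c0unit_apply (t : ℝ) (n k : ℕ) : (t • c0unit n) k = if k = n then t else 0 := by
  simp [c0unit]

lemma sum_smul_c0unit_apply (s : Finset ℕ) (t : ℕ → ℝ) (k : ℕ) :
    (∑ n ∈ s, t n • c0unit n) k = if k ∈ s then t k else 0 := by
  simp [ZeroAtInftyContinuousMap.sum_apply, smul_c0unit_apply]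

lemma smul_c0unit_le_smul_c0unit {s t : ℝ} (h : s ≤ t) (n : ℕ) : s • c0unit n ≤ t • c0unit n :=
  fun k => by simp only [smul_c0unit_apply]; split_ifs <;> simp [h]

lemma smul_c0unit_nonneg {t : ℝ} (ht : 0 ≤ t) (n : ℕ) : 0 ≤ t • c0unit n := by
  simpa using smul_c0unit_le_smul_c0unit ht n

lemma smul_c0unit_ne_zero {t : ℝ} (ht : t ≠ 0) (n : ℕ) : t • c0unit n ≠ 0 := fun h => by
  simpa [smul_c0unit_apply, ht] using DFunLike.congr_fun h n

lemma smul_c0unit_inf_smul_c0unit {m n : ℕ} (hmn : m ≠ n) {s t : ℝ} (hs : 0 ≤ s) (ht : 0 ≤ t) :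
    (s • c0unit m) ⊓ (t • c0unit n) = 0 := by
  ext k
  change (s • c0unit m) k ⊓ (t • c0unit n) k = 0
  rw [smul_c0unit_apply, smul_c0unit_apply]
  split_ifs <;> simp_all

lemma sum_apply_smul_c0unit_le {g : C₀(ℕ, ℝ)} (hg : 0 ≤ g) (s : Finset ℕ) :
    ∑ n ∈ s, g n • c0unit n ≤ g := fun k => by
  rw [sum_smul_c0unit_apply]
  split_ifs
  exacts [le_rfl, hg k]

lemma isChain_Icc_smul_c0unit (s : ℝ) (n : ℕ) : IsChain (· ≤ ·) (Icc 0 (s • c0unit n)) := by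
  have hle : ∀ x ∈ Icc 0 (s • c0unit n), ∀ y ∈ Icc 0 (s • c0unit n), x n ≤ y n → x ≤ y := by
    intro x hx y hy hxy k
    rcases eq_or_ne k n with rfl | hk
    · exact hxy
    have hx0 := hx.2 k
    have hy0 := hy.1 k
    simp only [smul_c0unit_apply, hk, if_false] at hx0
    exact hx0.trans hy0
  exact fun x hx y hy _ => (le_total (x n) (y n)).imp (hle x hx y hy) (hle y hy x hx)

theorem exists_forall_sum_smul_c0unit_le {φ : C₀(ℕ, ℝ) → ℝ} (hφ : MonotoneOn φ (Ici 0)) :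
    ∃ δ > (0 : ℝ), ∃ m : ℝ, ∀ s : Finset ℕ, φ (∑ n ∈ s, δ • c0unit n) ≤ m := by
  let P := Ici (0 : C₀(ℕ, ℝ))
  have : CompleteSpace P := isClosed_Ici.completeSpace_coe
  have : Nonempty P := ⟨⟨0, mem_Ici.2 le_rfl⟩⟩
  obtain ⟨m, x₀, hx₀⟩ := nonempty_interior_of_iUnion_of_closed
    (f := fun m : ℕ => closure {x : P | φ x ≤ m}) (fun _ => isClosed_closure)
    (iUnion_eq_univ_iff.2 fun x => ⟨⌈φ x⌉₊, subset_closure (Nat.le_ceil (φ x))⟩)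
  obtain ⟨ε, hε, hball⟩ := Metric.isOpen_iff.1 isOpen_interior x₀ hx₀
  refine ⟨ε / 4, by positivity, (m : ℝ), fun s => ?_⟩
  -- `w ⊔ x₀` lies in the ball, and the points of the cone near it dominate `∑ n ∈ s, (ε / 4) • eₙ`
  set w := ∑ n ∈ s, (ε / 2) • c0unit n
  let p : P := ⟨w ⊔ x₀.1, mem_Ici.2 (le_sup_of_le_right x₀.2)⟩
  have hpx₀ : dist p x₀ < ε := by
    calc dist p x₀ = ‖w ⊔ x₀.1 - 0 ⊔ x₀.1‖ := by
          rw [Subtype.dist_eq, dist_eq_norm, sup_eq_right.2 (mem_Ici.1 x₀.2)]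
      _ ≤ ‖w - 0‖ := norm_sup_sub_sup_le_norm _ _ _
      _ ≤ ε / 2 := by
          refine ZeroAtInftyContinuousMap.norm_le_of_forall_abs_apply_le (by positivity) fun k => ?_
          rw [sub_zero, sum_smul_c0unit_apply, abs_le]
          split_ifs <;> constructor <;> linarith
      _ < ε := by linarith
  obtain ⟨d, hd, hpd⟩ := Metric.mem_closure_iff.1 (interior_subset (hball hpx₀)) (ε / 4)
    (by positivity)
  refine (hφ (sum_nonneg fun n _ => smul_c0unit_nonneg (by positivity) n) d.2 fun k => ?_).trans hd
  rw [sum_smul_c0unit_apply]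
  split_ifs with hk
  · have hpk : ε / 2 ≤ p.1 k :=
      calc ε / 2 = w k := by simp [w, sum_smul_c0unit_apply, hk]
        _ ≤ p.1 k := le_sup_left (b := x₀.1 k)
    have hdk : |p.1 k - d.1 k| < ε / 4 :=
      (ZeroAtInftyContinuousMap.abs_apply_le_norm (p.1 - d.1) k).trans_lt
        (by rwa [← dist_eq_norm, ← Subtype.dist_eq])
    linarith [(abs_lt.1 hdk).2]
  · exact d.2 k

section Series

variable {E : Type*} [NormedAddCommGroup E] [NormedSpace ℝ E]

noncomputable def c0Series (v : ℕ → E) (hs : ∀ f : C₀(ℕ, ℝ), Summable fun n => f n • v n) :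
    C₀(ℕ, ℝ) →ₗ[ℝ] E where
  toFun f := ∑' n, f n • v n
  map_add' f g := by
    simp only [ZeroAtInftyContinuousMap.coe_add, Pi.add_apply, add_smul]
    exact (hs f).tsum_add (hs g)
  map_smul' c f := by
    simp only [ZeroAtInftyContinuousMap.coe_smul, Pi.smul_apply, smul_eq_mul, mul_smul,
      RingHom.id_apply]
    exact (hs f).tsum_const_smul c

lemma c0Series_apply {v : ℕ → E} (hs : ∀ f : C₀(ℕ, ℝ), Summable fun n => f n • v n)
    (f : C₀(ℕ, ℝ)) : c0Series v hs f = ∑' n, f n • v n :=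
  rfl

end Series

section NormedLattice

variable {E : Type*} [NormedAddCommGroup E] [Lattice E] [HasSolidNorm E] [IsOrderedAddMonoid E]

lemma norm_le_norm_of_nonneg_of_le {x y : E} (hx : 0 ≤ x) (hxy : x ≤ y) : ‖x‖ ≤ ‖y‖ :=
  norm_le_norm_of_abs_le_abs (by rwa [abs_of_nonneg hx, abs_of_nonneg (hx.trans hxy)])

variable [NormedSpace ℝ E] [PosSMulMono ℝ E]

lemma norm_sum_smul_le_of_pairwise_inf_eq_zero {ι : Type*} {v : ι → E} (hv : ∀ i, 0 ≤ v i)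
    (hd : Pairwise fun i j => v i ⊓ v j = 0) (s : Finset ι) {a : ι → ℝ} {C : ℝ} (hC : 0 ≤ C)
    (ha : ∀ i ∈ s, |a i| ≤ C) : ‖∑ i ∈ s, a i • v i‖ ≤ C * ‖∑ i ∈ s, v i‖ :=
  calc ‖∑ i ∈ s, a i • v i‖ = ‖∑ i ∈ s, |a i| • v i‖ := by
        rw [← norm_abs_eq_norm, abs_sum_smul_of_pairwise_inf_eq_zero hv hd]
    _ ≤ ‖C • ∑ i ∈ s, v i‖ := by
        refine norm_le_norm_of_nonneg_of_le
          (sum_nonneg fun i _ => smul_nonneg (abs_nonneg _) (hv i)) ?_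
        rw [smul_sum]
        exact sum_le_sum fun i hi => smul_le_smul_of_nonneg_right (ha i hi) (hv i)
    _ = C * ‖∑ i ∈ s, v i‖ := by rw [norm_smul, Real.norm_of_nonneg hC]

lemma summable_smul_of_pairwise_inf_eq_zero [CompleteSpace E] {ι : Type*} {v : ι → E}
    (hv : ∀ i, 0 ≤ v i) (hd : Pairwise fun i j => v i ⊓ v j = 0) {m : ℝ}
    (hm : ∀ s : Finset ι, ‖∑ i ∈ s, v i‖ ≤ m) {a : ι → ℝ}
    (ha : Filter.Tendsto a Filter.cofinite (𝓝 0)) : Summable fun i => a i • v i := by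
  refine summable_iff_vanishing_norm.2 fun ε hε => ?_
  set C := ε / (|m| + 1)
  have hC : 0 < C := by positivity
  obtain ⟨s, hs⟩ : ∃ s : Finset ι, ∀ i ∉ s, |a i| < C :=
    ⟨(Filter.eventually_cofinite.1 (Metric.tendsto_nhds.1 ha C hC)).toFinset, fun i hi => by
      simpa using hi⟩
  refine ⟨s, fun t hts => ?_⟩
  calc ‖∑ i ∈ t, a i • v i‖
      ≤ C * ‖∑ i ∈ t, v i‖ := norm_sum_smul_le_of_pairwise_inf_eq_zero hv hd t hC.le fun i hi =>
        (hs i (disjoint_left.1 hts hi)).le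
    _ ≤ C * |m| := mul_le_mul_of_nonneg_left ((hm t).trans (le_abs_self m)) hC.le
    _ < C * (|m| + 1) := by gcongr; linarith
    _ = ε := div_mul_cancel₀ _ (by positivity)

variable {v : ℕ → E}

lemma c0Series_abs (hv : ∀ n, 0 ≤ v n) (hd : Pairwise fun m n => v m ⊓ v n = 0)
    (hs : ∀ f : C₀(ℕ, ℝ), Summable fun n => f n • v n) (f : C₀(ℕ, ℝ)) :
    c0Series v hs |f| = |c0Series v hs f| := by
  have habs : Continuous fun x : E => |x| := continuous_id.sup continuous_neg
  refine tendsto_nhds_unique (hs |f|).hasSum.tendsto_sum_nat ?_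
  simpa only [c0Series_apply, ZeroAtInftyContinuousMap.abs_apply, Function.comp_def,
    abs_sum_smul_of_pairwise_inf_eq_zero hv hd] using
    (habs.tendsto _).comp (hs f).hasSum.tendsto_sum_nat

lemma c0Series_injective (hv : ∀ n, 0 ≤ v n) (hd : Pairwise fun m n => v m ⊓ v n = 0)
    (hv0 : ∀ n, v n ≠ 0) (hs : ∀ f : C₀(ℕ, ℝ), Summable fun n => f n • v n) :
    Function.Injective (c0Series v hs) := by
  refine (injective_iff_map_eq_zero _).2 fun f hf => ?_
  ext k
  have hk : |f k| • v k ≤ c0Series v hs |f| :=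
    (hs |f|).le_tsum k fun n _ => smul_nonneg (abs_nonneg _) (hv n)
  rw [c0Series_abs hv hd, hf, abs_zero] at hk
  simpa [hv0 k] using le_antisymm hk (smul_nonneg (abs_nonneg _) (hv k))

end NormedLattice

lemma OrderIso.map_sum_smul_c0unit {E : Type*} [AddCommGroup E] [Lattice E]
    [IsOrderedAddMonoid E] (o : C₀(ℕ, ℝ) ≃o E) (h0 : o 0 = 0) {t : ℕ → ℝ} (ht : ∀ n, 0 ≤ t n)
    (s : Finset ℕ) : o (∑ n ∈ s, t n • c0unit n) = ∑ n ∈ s, o (t n • c0unit n) :=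
  o.map_sum_of_pairwise_inf_eq_zero h0 (fun n => smul_c0unit_nonneg (ht n) n)
    (fun _ _ hmn => smul_c0unit_inf_smul_c0unit hmn (ht _) (ht _)) s

section OrderIso

variable {E : Type*} [NormedAddCommGroup E] [Lattice E] [IsOrderedAddMonoid E]
  [NormedSpace ℝ E] [PosSMulMono ℝ E] (o : C₀(ℕ, ℝ) ≃o E)

lemma OrderIso.tendsto_zero_of_smul_apply_smul_c0unit_le (h0 : o 0 = 0) {δ : ℝ} (hδ : 0 < δ)
    {y : E} {r : ℕ → ℝ} (hr : ∀ n, 0 ≤ r n) (hry : ∀ n, r n • o (δ • c0unit n) ≤ y) :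
    Filter.Tendsto r Filter.atTop (𝓝 0) := by
  refine tendsto_order.2 ⟨fun a ha => Filter.Eventually.of_forall fun n => ha.trans_le (hr n),
    fun θ hθ => ?_⟩
  -- if `θ ≤ r n` then `δ • eₙ ≤ o.symm (θ⁻¹ • y)`, which happens only finitely often in `c₀`
  set G := o.symm (θ⁻¹ • y)
  have hG := (Nat.cofinite_eq_atTop ▸ G.tendsto_cofinite).eventually (gt_mem_nhds hδ)
  filter_upwards [hG] with n hn
  by_contra! hθn
  have hle : δ • c0unit n ≤ G := by
    rw [o.le_symm_apply, le_inv_smul_iff_of_pos hθ]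
    exact (smul_le_smul_of_nonneg_right hθn (h0 ▸ o.monotone (smul_c0unit_nonneg hδ.le n))).trans
      (hry n)
  have hGn := hle n
  simp only [smul_c0unit_apply, if_true] at hGn
  linarith

variable [HasSolidNorm E]

lemma OrderIso.exists_apply_smul_c0unit_eq_smul (h0 : o 0 = 0) {s δ : ℝ} (hs : 0 ≤ s)
    (hδ : 0 < δ) (n : ℕ) : ∃ r ≥ (0 : ℝ), o (s • c0unit n) = r • o (δ • c0unit n) := by
  have hch : IsChain (· ≤ ·) (Icc 0 (o (max s δ • c0unit n))) := by
    rw [← h0, ← o.image_Icc]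
    exact (isChain_Icc_smul_c0unit _ n).image o
  have hmem : ∀ t, 0 ≤ t → t ≤ max s δ → o (t • c0unit n) ∈ Icc 0 (o (max s δ • c0unit n)) :=
    fun t ht htm => ⟨h0 ▸ o.monotone (smul_c0unit_nonneg ht n),
      o.monotone (smul_c0unit_le_smul_c0unit htm n)⟩
  have hne : o (δ • c0unit n) ≠ 0 := fun h =>
    smul_c0unit_ne_zero hδ.ne' n (o.injective (h.trans h0.symm))
  exact exists_nonneg_smul_eq_of_isChain_Icc hch (hmem s hs (le_max_left _ _))
    (hmem δ hδ.le (le_max_right _ _)) hne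

lemma OrderIso.exists_c0Series_eq_of_nonneg (h0 : o 0 = 0) {δ : ℝ} (hδ : 0 < δ)
    (hs : ∀ f : C₀(ℕ, ℝ), Summable fun n => f n • o (δ • c0unit n)) {y : E} (hy : 0 ≤ y) :
    ∃ f, c0Series (fun n => o (δ • c0unit n)) hs f = y := by
  set v := fun n => o (δ • c0unit n)
  set g := o.symm y
  have hg : 0 ≤ g := by rwa [o.le_symm_apply, h0]
  choose r hr hrv using fun n => o.exists_apply_smul_c0unit_eq_smul h0 (hg n) hδ n
  have hsingle : ∀ n, r n • v n ≤ y := fun n => by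
    have hn := o.monotone (sum_apply_smul_c0unit_le hg {n})
    rwa [sum_singleton, hrv n, o.apply_symm_apply] at hn
  let f : C₀(ℕ, ℝ) :=
    ⟨⟨r, continuous_of_discreteTopology⟩, by
      rw [cocompact_eq_atTop]
      exact o.tendsto_zero_of_smul_apply_smul_c0unit_le h0 hδ hr hsingle⟩
  have hpartial : ∀ N, ∑ n ∈ range N, f n • v n = o (∑ n ∈ range N, g n • c0unit n) := fun N => by
    rw [o.map_sum_smul_c0unit h0 hg]
    exact sum_congr rfl fun n _ => (hrv n).symm
  refine ⟨f, le_antisymm ?_ ?_⟩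
  · refine le_of_tendsto' (hs f).hasSum.tendsto_sum_nat fun N => ?_
    rw [hpartial]
    exact (o.monotone (sum_apply_smul_c0unit_le hg _)).trans_eq (o.apply_symm_apply y)
  · refine (o.apply_symm_apply y).symm.trans_le (o.le_symm_apply.1 fun k => ?_)
    have hN := o.le_symm_apply.2 ((hpartial (k + 1)).symm.trans_le
      ((hs f).sum_le_tsum (range (k + 1)) fun n _ =>
        smul_nonneg (hr n) (h0 ▸ o.monotone (smul_c0unit_nonneg hδ.le n))))
    have hk := hN k
    rwa [sum_smul_c0unit_apply, if_pos (self_mem_range_succ k)] at hk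

lemma OrderIso.c0Series_surjective (h0 : o 0 = 0) {δ : ℝ} (hδ : 0 < δ)
    (hs : ∀ f : C₀(ℕ, ℝ), Summable fun n => f n • o (δ • c0unit n)) :
    Function.Surjective (c0Series (fun n => o (δ • c0unit n)) hs) := fun y => by
  obtain ⟨f₁, hf₁⟩ := o.exists_c0Series_eq_of_nonneg h0 hδ hs (posPart_nonneg y)
  obtain ⟨f₂, hf₂⟩ := o.exists_c0Series_eq_of_nonneg h0 hδ hs (negPart_nonneg y)
  exact ⟨f₁ - f₂, by rw [map_sub, hf₁, hf₂, posPart_sub_negPart]⟩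

variable [CompleteSpace E]

theorem OrderIso.exists_linearEquiv_map_abs (h0 : o 0 = 0) :
    ∃ S : C₀(ℕ, ℝ) ≃ₗ[ℝ] E, ∀ f : C₀(ℕ, ℝ), S |f| = |S f| := by
  obtain ⟨δ, hδ, m, hm⟩ := exists_forall_sum_smul_c0unit_le (φ := fun f => ‖o f‖)
    fun f hf _ _ hfg => norm_le_norm_of_nonneg_of_le (h0 ▸ o.monotone hf) (o.monotone hfg)
  set v := fun n => o (δ • c0unit n)
  have hv : ∀ n, 0 ≤ v n := fun n => h0 ▸ o.monotone (smul_c0unit_nonneg hδ.le n)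
  have hd : Pairwise fun m n => v m ⊓ v n = 0 := fun m n hmn => show o _ ⊓ o _ = 0 by
    rw [← o.map_inf, smul_c0unit_inf_smul_c0unit hmn hδ.le hδ.le, h0]
  have hv0 : ∀ n, v n ≠ 0 := fun n h =>
    smul_c0unit_ne_zero hδ.ne' n (o.injective (h.trans h0.symm))
  have hvm : ∀ s, ‖∑ n ∈ s, v n‖ ≤ m := fun s => by
    simpa only [o.map_sum_smul_c0unit h0 fun _ => hδ.le] using hm s
  have hs : ∀ f : C₀(ℕ, ℝ), Summable fun n => f n • v n := fun f =>
    summable_smul_of_pairwise_inf_eq_zero hv hd hvm f.tendsto_cofinite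
  exact ⟨.ofBijective (c0Series v hs)
    ⟨c0Series_injective hv hd hv0 hs, o.c0Series_surjective h0 hδ hs⟩, c0Series_abs hv hd hs⟩

end OrderIso

/-- If a Banach lattice `E` is (possibly nonlinearly) order isomorphic to
`c₀`, then `E` is lattice isomorphic to `c₀`: there is a linear bijection `S : c₀ → E`
with `S |x| = |S x|` for all `x`. -/
theorem stmt3 (E : Type*) [NormedAddCommGroup E] [Lattice E] [HasSolidNorm E] [IsOrderedAddMonoid E]
    [NormedSpace ℝ E] [PosSMulStrictMono ℝ E]
    [CompleteSpace E]
    (T : C₀(ℕ, ℝ) → E) (hbij : Function.Bijective T)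
    (hord : ∀ f g : C₀(ℕ, ℝ), f ≤ g ↔ T f ≤ T g) :
    ∃ S : C₀(ℕ, ℝ) ≃ₗ[ℝ] E, ∀ f : C₀(ℕ, ℝ), S |f| = |S f| := by
  let o : C₀(ℕ, ℝ) ≃o E :=
    (⟨Equiv.ofBijective T hbij, (hord _ _).symm⟩ : C₀(ℕ, ℝ) ≃o E).trans (OrderIso.addRight (-T 0))
  exact o.exists_linearEquiv_map_abs (add_neg_cancel (T 0))
end

section
/- Let E be a Banach lattice and let T : c₀ → E be an order isomorphism with T0 = 0. Denote by (eₙ) the unit vector basis of c₀ and set xₙ = Teₙ. Then (xₙ) is a disjoint sequence of positive elements of E, and for each n ∈ ℕ and every a ≥ 0 there exists b ≥ 0 such that T(a·eₙ) = b·xₙ. -/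
open Filter Topology ZeroAtInfty

/-!
An order isomorphism `T` of `c₀` onto `E` with `T 0 = 0` maps each interval `[0, f]` onto
`[0, T f]` and preserves finite infima, so `xₘ ⊓ xₙ = T (eₘ ⊓ eₙ) = 0`. For the scalar
multiples, `[0, c • eₙ]` is totally ordered in `c₀`, hence so is its image `[0, T (c • eₙ)]`;
and in an ordered topological vector space every element of a totally ordered interval
`[0, v]` is a multiple of `v`, by connectedness of `[0, 1]`.
-/

open Set

theorem exists_smul_eq_of_isChain_Icc {E : Type*} [AddCommGroup E] [PartialOrder E]
    [IsOrderedAddMonoid E] [Module ℝ E] [PosSMulMono ℝ E] [TopologicalSpace E]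
    [ContinuousSMul ℝ E] [OrderClosedTopology E] {u v : E}
    (hchain : IsChain (· ≤ ·) (Icc 0 v)) (hu : u ∈ Icc 0 v) :
    ∃ t ∈ Icc (0 : ℝ) 1, t • v = u := by
  have hv : 0 ≤ v := hu.1.trans hu.2
  have hsegment : ∀ t ∈ Icc (0 : ℝ) 1, t • v ∈ Icc 0 v := fun t ht =>
    ⟨smul_nonneg ht.1 hv, smul_le_of_le_one_left hv ht.2⟩
  have hcont : Continuous fun t : ℝ => t • v := continuous_id.smul continuous_const
  -- `[0, 1]` is covered by the closed sets `{t • v ≤ u}` and `{u ≤ t • v}`, so by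
  -- connectedness they meet.
  obtain ⟨t, ht, hle, hge⟩ := isPreconnected_closed_iff.1 isPreconnected_Icc
    {t : ℝ | t • v ≤ u} {t | u ≤ t • v}
    (isClosed_le hcont continuous_const) (isClosed_le continuous_const hcont)
    (fun t ht => hchain.total (hsegment t ht) hu)
    ⟨0, left_mem_Icc.2 zero_le_one, by simpa using hu.1⟩
    ⟨1, right_mem_Icc.2 zero_le_one, by simpa using hu.2⟩
  exact ⟨t, ht, le_antisymm hle hge⟩

namespace ZeroAtInftyContinuousMap

theorem le_def {α : Type*} [TopologicalSpace α] {f g : C₀(α, ℝ)} : f ≤ g ↔ ∀ x, f x ≤ g x :=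
  Iff.rfl

end ZeroAtInftyContinuousMap

open ZeroAtInftyContinuousMap

theorem c0unit_apply (n m : ℕ) : c0unit n m = if m = n then 1 else 0 := rfl

theorem c0unit_ne_zero (n : ℕ) : c0unit n ≠ 0 := fun h => by
  simpa [c0unit_apply] using DFunLike.congr_fun h n

theorem smul_c0unit_le_smul_c0unit_s5 {a b : ℝ} (hab : a ≤ b) (n : ℕ) :
    a • c0unit n ≤ b • c0unit n := le_def.2 fun m => by
  by_cases hm : m = n <;> simp [c0unit_apply, hm, hab]

theorem c0unit_nonneg (n : ℕ) : 0 ≤ c0unit n := by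
  simpa using smul_c0unit_le_smul_c0unit_s5 zero_le_one n

theorem c0unit_inf_c0unit {m n : ℕ} (hmn : m ≠ n) : c0unit m ⊓ c0unit n = 0 := by
  ext k
  show c0unit m k ⊓ c0unit n k = 0
  by_cases hk : k = m
  · simp [c0unit_apply, hk, hmn]
  · by_cases hk' : k = n <;> simp [c0unit_apply, hk, hk', hmn.symm]

theorem apply_eq_zero_of_mem_Icc_smul_c0unit {c : ℝ} {n m : ℕ} {f : C₀(ℕ, ℝ)}
    (hf : f ∈ Icc 0 (c • c0unit n)) (hm : m ≠ n) : f m = 0 :=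
  le_antisymm (by simpa [c0unit_apply, hm] using le_def.1 hf.2 m) (le_def.1 hf.1 m)

theorem isChain_Icc_zero_smul_c0unit (c : ℝ) (n : ℕ) :
    IsChain (· ≤ ·) (Icc 0 (c • c0unit n)) := by
  intro f hf g hg _
  have hcompare : ∀ {f g : C₀(ℕ, ℝ)}, f ∈ Icc 0 (c • c0unit n) → g ∈ Icc 0 (c • c0unit n) →
      f n ≤ g n → f ≤ g := fun hf hg hfg => le_def.2 fun m => by
    by_cases hm : m = n
    · rwa [hm]
    · rw [apply_eq_zero_of_mem_Icc_smul_c0unit hf hm, apply_eq_zero_of_mem_Icc_smul_c0unit hg hm]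
  exact (le_total (f n) (g n)).imp (hcompare hf hg) (hcompare hg hf)

theorem stmt5_general (E : Type*) [NormedAddCommGroup E] [Lattice E] [IsOrderedAddMonoid E]
    [HasSolidNorm E] [NormedSpace ℝ E] [PosSMulStrictMono ℝ E]
    (T : C₀(ℕ, ℝ) → E) (hbij : Function.Bijective T)
    (hord : ∀ f g : C₀(ℕ, ℝ), f ≤ g ↔ T f ≤ T g) (hzero : T 0 = 0) :
    (∀ n : ℕ, 0 ≤ T (c0unit n)) ∧
    (∀ m n : ℕ, m ≠ n → |T (c0unit m)| ⊓ |T (c0unit n)| = 0) ∧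
    (∀ (n : ℕ) (a : ℝ), 0 ≤ a →
      ∃ b : ℝ, 0 ≤ b ∧ T (a • c0unit n) = b • T (c0unit n)) := by
  let Φ : C₀(ℕ, ℝ) ≃o E := { Equiv.ofBijective T hbij with map_rel_iff' := (hord _ _).symm }
  have hΦ : ⇑Φ = T := rfl
  have hpos : ∀ {f}, 0 ≤ f → 0 ≤ T f := fun hf => hzero ▸ (hord _ _).1 hf
  refine ⟨fun n => hpos (c0unit_nonneg n), fun m n hmn => ?_, fun n a ha => ?_⟩
  · rw [abs_of_nonneg (hpos (c0unit_nonneg m)), abs_of_nonneg (hpos (c0unit_nonneg n))]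
    simpa [hΦ, c0unit_inf_c0unit hmn, hzero] using (Φ.map_inf (c0unit m) (c0unit n)).symm
  · -- `c = max a 1` puts both `a • eₙ` and `eₙ` in `[0, c • eₙ]`.
    set c := max a 1
    have hchain : IsChain (· ≤ ·) (Icc 0 (T (c • c0unit n))) := by
      have := (isChain_Icc_zero_smul_c0unit c n).image Φ
      rwa [Φ.image_Icc, hΦ, hzero] at this
    have hmem : ∀ {b}, 0 ≤ b → b ≤ c → T (b • c0unit n) ∈ Icc 0 (T (c • c0unit n)) :=
      fun hb hbc => ⟨hpos (by simpa using smul_c0unit_le_smul_c0unit_s5 hb n),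
        (hord _ _).1 (smul_c0unit_le_smul_c0unit_s5 hbc n)⟩
    obtain ⟨s, hs, hsa⟩ := exists_smul_eq_of_isChain_Icc hchain (hmem ha (le_max_left a 1))
    obtain ⟨r, hr, hr1⟩ := exists_smul_eq_of_isChain_Icc hchain
      (hmem zero_le_one (le_max_right a 1))
    rw [one_smul] at hr1
    have hr0 : r ≠ 0 := by
      rintro rfl
      exact c0unit_ne_zero n (hbij.injective (by rw [← hr1, zero_smul, hzero]))
    exact ⟨s / r, div_nonneg hs.1 hr.1, by rw [← hsa, ← hr1, smul_smul, div_mul_cancel₀ s hr0]⟩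

/-- Let `T : c₀ → E` be an order isomorphism onto a Banach lattice `E` with
`T 0 = 0`, and let `xₙ = T eₙ` where `(eₙ)` is the unit vector basis of `c₀`. Then `(xₙ)` is a
disjoint sequence of positive elements of `E`, and for each `n` and each `a ≥ 0` there is
`b ≥ 0` with `T (a • eₙ) = b • xₙ`. -/
theorem stmt5 (E : Type*) [NormedAddCommGroup E] [Lattice E] [IsOrderedAddMonoid E]
    [HasSolidNorm E] [NormedSpace ℝ E] [PosSMulStrictMono ℝ E]
    [CompleteSpace E]
    (T : C₀(ℕ, ℝ) → E) (hbij : Function.Bijective T)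
    (hord : ∀ f g : C₀(ℕ, ℝ), f ≤ g ↔ T f ≤ T g) (hzero : T 0 = 0) :
    (∀ n : ℕ, 0 ≤ T (c0unit n)) ∧
    (∀ m n : ℕ, m ≠ n → |T (c0unit m)| ⊓ |T (c0unit n)| = 0) ∧
    (∀ (n : ℕ) (a : ℝ), 0 ≤ a →
      ∃ b : ℝ, 0 ≤ b ∧ T (a • c0unit n) = b • T (c0unit n)) :=
  stmt5_general E T hbij hord hzero
end

section
/- Let E and F be Banach lattices and let T : E → F be an order isomorphism with T0 = 0. If (x_k) is a disjoint sequence of positive elements of E with inf_k ‖x_k‖ > 0, then there exists N ∈ ℕ such that limsup_k ‖T(N·x_k)‖ > 0. -/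
/-! If the conclusion failed, we could pick `k_N` with `‖T (N • x_{k_N})‖ < 2⁻ᴺ`. These are
positive elements of `F` with summable norms, so their sum bounds them all from above; it is
`T y` for some `y`, and since `T` is an order isomorphism, `N • x_{k_N} ≤ y` for every `N`. By
solidity of the norm this gives `N c ≤ ‖y‖` for all `N`, which is absurd. -/

section SolidNorm

variable {α : Type*} [NormedAddCommGroup α] [Lattice α] [HasSolidNorm α] [IsOrderedAddMonoid α]

theorem norm_le_norm_of_nonneg_of_le_s12 {a b : α} (ha : 0 ≤ a) (hab : a ≤ b) : ‖a‖ ≤ ‖b‖ := by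
  refine norm_le_norm_of_abs_le_abs ?_
  rwa [abs_of_nonneg ha, abs_of_nonneg (ha.trans hab)]

theorem bddAbove_range_of_nonneg_of_summable_norm [CompleteSpace α] {ι : Type*} {f : ι → α}
    (hf : ∀ i, 0 ≤ f i) (hs : Summable fun i => ‖f i‖) : BddAbove (Set.range f) :=
  ⟨∑' i, f i, Set.forall_mem_range.2 fun i => hs.of_norm.le_tsum i fun j _ => hf j⟩

end SolidNorm

theorem bddAbove_range_of_bddAbove_range_comp {α β ι : Type*} [Preorder α] [Preorder β]
    {T : α → β} (hT : Function.Surjective T) (hle : ∀ a b, T a ≤ T b → a ≤ b) {g : ι → α}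
    (h : BddAbove (Set.range fun i => T (g i))) : BddAbove (Set.range g) := by
  obtain ⟨b, hb⟩ := h
  obtain ⟨y, rfl⟩ := hT b
  exact ⟨y, Set.forall_mem_range.2 fun i => hle _ _ (hb ⟨i, rfl⟩)⟩

theorem stmt12_general (E : Type*) [NormedAddCommGroup E] [Lattice E] [IsOrderedAddMonoid E] [HasSolidNorm E] [NormedSpace ℝ E] [PosSMulStrictMono ℝ E]
    (F : Type*) [NormedAddCommGroup F] [Lattice F] [IsOrderedAddMonoid F] [HasSolidNorm F]
    [CompleteSpace F]
    (T : E → F) (hbij : Function.Bijective T) (hord : ∀ x y : E, x ≤ y ↔ T x ≤ T y)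
    (hzero : T 0 = 0)
    (x : ℕ → E) (hpos : ∀ k, 0 ≤ x k)
    (hinf : ∃ c > (0 : ℝ), ∀ k, c ≤ ‖x k‖) :
    ∃ N : ℕ, ∃ δ > (0 : ℝ), ∃ᶠ k in Filter.atTop, δ ≤ ‖T ((N : ℝ) • x k)‖ := by
  obtain ⟨c, hc, hcx⟩ := hinf
  by_contra! hsmall
  choose k hk using fun N : ℕ => (hsmall N ((1 / 2) ^ N) (by positivity)).exists
  set g : ℕ → E := fun N => (N : ℝ) • x (k N)
  have hg : ∀ N, 0 ≤ g N := fun N => smul_nonneg N.cast_nonneg (hpos _)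
  have hTg : ∀ N, 0 ≤ T (g N) := fun N => hzero ▸ (hord 0 _).1 (hg N)
  obtain ⟨y, hy⟩ : BddAbove (Set.range g) :=
    bddAbove_range_of_bddAbove_range_comp hbij.2 (fun a b => (hord a b).2)
      (bddAbove_range_of_nonneg_of_summable_norm hTg
        (summable_geometric_two.of_nonneg_of_le (fun _ => norm_nonneg _) fun N => (hk N).le))
  obtain ⟨N, hN⟩ := exists_nat_gt (‖y‖ / c)
  have hNy : N * c ≤ ‖y‖ :=
    calc (N : ℝ) * c ≤ N * ‖x (k N)‖ := by gcongr; exact hcx _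
      _ = ‖g N‖ := by simp only [g, norm_smul, Real.norm_natCast]
      _ ≤ ‖y‖ := norm_le_norm_of_nonneg_of_le_s12 (hg N) (hy ⟨N, rfl⟩)
  exact hNy.not_gt ((div_lt_iff₀ hc).1 hN)

/-- Let `T : E → F` be an order isomorphism between Banach lattices with
`T 0 = 0`. If `(xₖ)` is a disjoint sequence of positive elements of `E` with
`inf_k ‖xₖ‖ > 0`, then there is `N ∈ ℕ` with `limsup_k ‖T (N • xₖ)‖ > 0`, i.e. for some
`δ > 0` we have `‖T (N • xₖ)‖ ≥ δ` frequently. -/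
theorem stmt12 (E : Type*) [NormedAddCommGroup E] [Lattice E] [IsOrderedAddMonoid E] [HasSolidNorm E] [NormedSpace ℝ E] [PosSMulStrictMono ℝ E] [PosSMulReflectLT ℝ E]
    [CompleteSpace E]
    (F : Type*) [NormedAddCommGroup F] [Lattice F] [IsOrderedAddMonoid F] [HasSolidNorm F] [NormedSpace ℝ F] [PosSMulStrictMono ℝ F] [PosSMulReflectLT ℝ F]
    [CompleteSpace F]
    (T : E → F) (hbij : Function.Bijective T) (hord : ∀ x y : E, x ≤ y ↔ T x ≤ T y)
    (hzero : T 0 = 0)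
    (x : ℕ → E) (hpos : ∀ k, 0 ≤ x k) (hdisj : ∀ m k : ℕ, m ≠ k → x m ⊓ x k = 0)
    (hinf : ∃ c > (0 : ℝ), ∀ k, c ≤ ‖x k‖) :
    ∃ N : ℕ, ∃ δ > (0 : ℝ), ∃ᶠ k in Filter.atTop, δ ≤ ‖T ((N : ℝ) • x k)‖ :=
  stmt12_general E F T hbij hord hzero x hpos hinf
end
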